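/- arXiv:2012.07346 — 2 statements merged into one kernel-verified Lean document; each statement's English description precedes it below -/
import Mathlib

section
/- Let u_1,…,u_k be points in ℝ^d equipped with a norm ‖·‖ and fix γ with 0 < γ < 1/2. For each j ∈ {1,…,k} let Δ_j = inf{ r ≥ 0 : |{ l : ‖u_j − u_l‖ ≤ r }| ≥ k(γ + 1/2) }, and let u_⋆ be a point among u_1,…,u_k with smallest Δ_j (the smallest-ball selection). Then for every u ∈ ℝ^d, ‖u_⋆ − u‖ ≤ 3 · Δ(u;γ). -/
/-!
If more than `k(1/2+γ)` of the points lie within `Δ(x;γ)` of `x`, then for any such point `u_j`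
the ball of radius `2Δ(x;γ)` around `u_j` holds all of them, so `Δ_⋆ ≤ Δ_j ≤ 2Δ(x;γ)`. The
ball of radius `Δ_⋆` around `u_⋆` and the ball of radius `Δ(x;γ)` around `x` together hold more
than `k` points, hence share some `u_l`, and `‖u_⋆ - x‖ ≤ Δ_⋆ + Δ(x;γ) ≤ 3Δ(x;γ)`.
Both infima are attained because the number of points within `r` only changes at the finitely
many pairwise distances.
-/

set_option autoImplicit false

open Finset

/-- `robustRadius u γ x` is Δ(x;γ): the radius of the smallest ball centered at `x`
containing strictly more than `k(1/2+γ)` of the points `u 1,…,u k`. -/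
noncomputable def robustRadius {E : Type*} [NormedAddCommGroup E] {k : ℕ}
    (u : Fin k → E) (γ : ℝ) (x : E) : ℝ :=
  sInf {r : ℝ | 0 ≤ r ∧
    (k : ℝ) * (1/2 + γ) < ((Finset.univ.filter (fun j => ‖u j - x‖ ≤ r)).card : ℝ)}

/-- `smallestBallRadius u γ j` is Δ_j: the radius of the smallest ball centered at `u j`
containing at least `k(γ+1/2)` of the points `u 1,…,u k`. -/
noncomputable def smallestBallRadius {E : Type*} [NormedAddCommGroup E] {k : ℕ}
    (u : Fin k → E) (γ : ℝ) (j : Fin k) : ℝ :=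
  sInf {r : ℝ | 0 ≤ r ∧
    (k : ℝ) * (γ + 1/2) ≤ ((Finset.univ.filter (fun l => ‖u j - u l‖ ≤ r)).card : ℝ)}

section Radius

variable {ι : Type*} [Fintype ι]

theorem exists_nonneg_card_filter_le_eq (d : ι → ℝ) :
    ∃ r, 0 ≤ r ∧ #{j | d j ≤ r} = Fintype.card ι := by
  obtain ⟨R, hR⟩ := (Set.finite_range d).bddAbove
  refine ⟨max R 0, le_max_right _ _, ?_⟩
  rw [filter_true_of_mem fun j _ => (hR ⟨j, rfl⟩).trans (le_max_left _ _), card_univ]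

theorem csInf_nonneg_card_filter_le_mem (d : ι → ℝ) (p : ℕ → Prop)
    (hne : ∃ r, 0 ≤ r ∧ p #{j | d j ≤ r}) :
    sInf {r : ℝ | 0 ≤ r ∧ p #{j | d j ≤ r}} ∈ {r : ℝ | 0 ≤ r ∧ p #{j | d j ≤ r}} := by
  set S := {r : ℝ | 0 ≤ r ∧ p #{j | d j ≤ r}}
  set F : Finset ℝ := insert 0 (univ.image d)
  -- rounding `r` down to the largest of `0` and the `d j` below it keeps the count
  have round_down : ∀ r ∈ S, ∃ r' ∈ S ∩ F, r' ≤ r := by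
    rintro r ⟨hr, hp⟩
    have hF : (F.filter (· ≤ r)).Nonempty := ⟨0, by simp [F, hr]⟩
    have hmax := mem_filter.1 (max'_mem _ hF)
    have hle : ∀ j, d j ≤ r ↔ d j ≤ (F.filter (· ≤ r)).max' hF := fun j =>
      ⟨fun h => le_max' _ _ (by simp [F, h]), fun h => h.trans hmax.2⟩
    refine ⟨_, ⟨⟨le_max' _ _ (by simp [F, hr]), ?_⟩, hmax.1⟩, hmax.2⟩
    simpa only [hle] using hp
  have hfin : (S ∩ F).Finite := F.finite_toSet.inter_of_right S
  obtain ⟨r, hr⟩ := hne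
  obtain ⟨r', hr', -⟩ := round_down r hr
  have hleast : IsLeast S (sInf (S ∩ F)) :=
    ⟨(Set.Nonempty.csInf_mem ⟨r', hr'⟩ hfin).1, fun r hr =>
      let ⟨_, hr', hle⟩ := round_down r hr; (csInf_le hfin.bddBelow hr').trans hle⟩
  exact hleast.csInf_eq ▸ hleast.1

end Radius

section Selection

variable {E : Type*} [NormedAddCommGroup E] {k : ℕ} (u : Fin k → E) {γ : ℝ}

theorem robustRadius_mem (hk : 0 < k) (hγ : γ < 1/2) (x : E) :
    0 ≤ robustRadius u γ x ∧
      (k : ℝ) * (1/2 + γ) < #{j | ‖u j - x‖ ≤ robustRadius u γ x} := by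
  refine csInf_nonneg_card_filter_le_mem (fun j => ‖u j - x‖)
    (fun n => (k : ℝ) * (1/2 + γ) < n) ?_
  obtain ⟨r, hr, hcard⟩ := exists_nonneg_card_filter_le_eq fun j => ‖u j - x‖
  refine ⟨r, hr, ?_⟩
  rw [hcard, Fintype.card_fin]
  have : (0 : ℝ) < k := Nat.cast_pos.2 hk
  nlinarith

theorem smallestBallRadius_mem (hγ : γ < 1/2) (j : Fin k) :
    (k : ℝ) * (γ + 1/2) ≤ #{l | ‖u j - u l‖ ≤ smallestBallRadius u γ j} := by
  refine (csInf_nonneg_card_filter_le_mem (fun l => ‖u j - u l‖)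
    (fun n => (k : ℝ) * (γ + 1/2) ≤ n) ?_).2
  obtain ⟨r, hr, hcard⟩ := exists_nonneg_card_filter_le_eq fun l => ‖u j - u l‖
  refine ⟨r, hr, ?_⟩
  rw [hcard, Fintype.card_fin]
  have : (0 : ℝ) ≤ k := Nat.cast_nonneg k
  nlinarith

theorem smallestBallRadius_le_two_mul_robustRadius (hγ : γ < 1/2) {x : E} {j : Fin k}
    (hj : ‖u j - x‖ ≤ robustRadius u γ x) :
    smallestBallRadius u γ j ≤ 2 * robustRadius u γ x := by
  obtain ⟨hΔ, hcard⟩ := robustRadius_mem u j.pos hγ x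
  refine csInf_le ⟨0, fun r hr => hr.1⟩ ⟨by positivity, ?_⟩
  have hsub : ({l | ‖u l - x‖ ≤ robustRadius u γ x} : Finset (Fin k)) ⊆
      ({l | ‖u j - u l‖ ≤ 2 * robustRadius u γ x} : Finset (Fin k)) := by
    intro l hl
    simp only [mem_filter, mem_univ, true_and] at hl ⊢
    calc ‖u j - u l‖ ≤ ‖u j - x‖ + ‖u l - x‖ := by
          simpa only [dist_eq_norm] using dist_triangle_right (u j) (u l) x
      _ ≤ 2 * robustRadius u γ x := by linarith
  calc (k : ℝ) * (γ + 1/2) = k * (1/2 + γ) := by ring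
    _ ≤ _ := hcard.le.trans (by exact_mod_cast card_le_card hsub)

end Selection

theorem smallest_ball_robust_distance_approx_general
    {E : Type*} [NormedAddCommGroup E]
    {k : ℕ} (u : Fin k → E) (γ : ℝ) (hγ0 : 0 < γ) (hγ1 : γ < 1/2)
    (star : Fin k)
    (hstar : ∀ j, smallestBallRadius u γ star ≤ smallestBallRadius u γ j)
    (x : E) :
    ‖u star - x‖ ≤ 3 * robustRadius u γ x := by
  obtain ⟨-, hnear_x⟩ := robustRadius_mem u star.pos hγ1 x
  have hnear_star := smallestBallRadius_mem u hγ1 star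
  set Δ := robustRadius u γ x
  set A : Finset (Fin k) := {j | ‖u j - x‖ ≤ Δ}
  set B : Finset (Fin k) := {l | ‖u star - u l‖ ≤ smallestBallRadius u γ star}
  obtain ⟨j, hj⟩ : A.Nonempty :=
    card_pos.1 (by exact_mod_cast (by positivity : (0 : ℝ) ≤ k * (1/2 + γ)).trans_lt hnear_x)
  have hρ : smallestBallRadius u γ star ≤ 2 * Δ :=
    (hstar j).trans (smallestBallRadius_le_two_mul_robustRadius u hγ1 (mem_filter.1 hj).2)
  obtain ⟨l, hl⟩ : (A ∩ B).Nonempty := by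
    refine inter_nonempty_of_card_lt_card_add_card (subset_univ _) (subset_univ _) ?_
    rw [card_univ, Fintype.card_fin]
    have : (0 : ℝ) ≤ k * γ := by positivity
    exact_mod_cast (by linarith : (k : ℝ) < #A + #B)
  simp only [A, B, mem_inter, mem_filter, mem_univ, true_and] at hl
  calc ‖u star - x‖ ≤ ‖u star - u l‖ + ‖u l - x‖ := norm_sub_le_norm_sub_add_norm_sub _ _ _
    _ ≤ 3 * Δ := by linarith

/-- the smallest-ball selection `u star` (a point among `u 1,…,u k` with
smallest Δ_j) satisfies `‖u star − u‖ ≤ 3 Δ(u;γ)` for every `u` and `0 < γ < 1/2`. -/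
theorem smallest_ball_robust_distance_approx
    {E : Type*} [NormedAddCommGroup E] [NormedSpace ℝ E] [FiniteDimensional ℝ E]
    {k : ℕ} (u : Fin k → E) (γ : ℝ) (hγ0 : 0 < γ) (hγ1 : γ < 1/2)
    (star : Fin k)
    (hstar : ∀ j, smallestBallRadius u γ star ≤ smallestBallRadius u γ j)
    (x : E) :
    ‖u star - x‖ ≤ 3 * robustRadius u γ x :=
  smallest_ball_robust_distance_approx_general u γ hγ0 hγ1 star hstar x
end

section
/- Let U_1,…,U_n be i.i.d. real-valued random variables with mean μ and variance σ² < ∞. Fix δ ∈ (0,1), set k = ⌈log(1/δ)⌉, and suppose n ≥ 2(1 + log(1/δ)). Partition {1,…,n} into k disjoint blocks I_1,…,I_k each of size at least ⌊n/k⌋, let û_j be the average of {U_i : i ∈ I_j} for each j, and let θ̂ = median{û_1,…,û_k}. Then P{ |θ̂ − μ| > 2√2·e·√( (1 + log(1/δ)) σ² / n ) } ≤ δ, where e is Euler's number. -/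
/-!
Each block mean has variance `σ²/|I_j|` with `|I_j| ≥ n/(2(1 + log(1/δ)))`, so by Chebyshev it
misses `m` by more than `ε = 2√2·e·√((1 + log(1/δ))σ²/n)` with probability at most `(2e)⁻²`.
Disjoint blocks of independent variables have independent means, and if the median misses `m`
by more than `ε` then so do at least `r = ⌈k/2⌉` of the block means, all on the same side.
A union bound over the `(k choose r) ≤ 2ᵏ` sets of `r` blocks gives
`2ᵏ (2e)^{-2r} ≤ e^{-k} ≤ δ`.
-/

open Finset MeasureTheory ProbabilityTheory

theorem MeasureTheory.memLp_two_of_integrable_sq_sub {Ω : Type*} [MeasurableSpace Ω]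
    {μ : Measure Ω} [IsFiniteMeasure μ] {X : Ω → ℝ} (hX : AEStronglyMeasurable X μ) {c : ℝ}
    (h : Integrable (fun ω ↦ (X ω - c) ^ 2) μ) : MemLp X 2 μ := by
  simpa using ((memLp_two_iff_integrable_sq (hX.sub aestronglyMeasurable_const)).2 h).add
    (memLp_const c)

namespace ProbabilityTheory

variable {Ω ι κ β : Type*} [MeasurableSpace Ω] {μ : Measure Ω} [MeasurableSpace β]

theorem iIndepFun.iIndepFun_disjoint_blocks {U : κ → Ω → β} (hU : iIndepFun U μ)
    (hmeas : ∀ i, Measurable (U i)) {I : ι → Finset κ}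
    (hI : Pairwise (Function.onFun Disjoint I)) : iIndepFun (fun j ω (i : I j) ↦ U i ω) μ := by
  classical
  have := hU.isProbabilityMeasure
  refine (iIndepFun_iff_measure_inter_preimage_eq_mul).2 fun S {B} hB ↦ ?_
  induction S using Finset.induction_on with
  | empty => simp
  | @insert j T hjT ih =>
    rw [Finset.set_biInter_insert, Finset.prod_insert hjT,
      ← ih fun l hl ↦ hB l (mem_insert_of_mem hl)]
    have hdisj : Disjoint (I j) (T.biUnion I) :=
      (disjoint_biUnion_right _ _ _).2 fun l hl ↦ hI fun h ↦ hjT (h ▸ hl)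
    let restrict : (T.biUnion I → β) → ∀ l : T, I l → β :=
      fun x l i ↦ x ⟨i, mem_biUnion.2 ⟨l, l.2, i.2⟩⟩
    have hrestrict : Measurable restrict := by fun_prop
    have hC : MeasurableSet {x : ∀ l : T, I l → β | ∀ l : T, x l ∈ B l} := by
      simp only [Set.ofPred_forall]
      exact .iInter fun l ↦ measurable_pi_apply _ (hB l (mem_insert_of_mem l.2))
    have h := ((hU.indepFun_finset _ _ hdisj hmeas).comp measurable_id hrestrict)
      |>.measure_inter_preimage_eq_mul _ _ (hB j (mem_insert_self j T)) hC
    convert h using 3 <;> ext ω <;> simp [restrict]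

theorem iIndepFun.iIndepSet_preimage {β : ι → Type*} [∀ j, MeasurableSpace (β j)]
    {Y : ∀ j, Ω → β j} (hY : iIndepFun Y μ) (hmeas : ∀ j, Measurable (Y j))
    {B : ∀ j, Set (β j)} (hB : ∀ j, MeasurableSet (B j)) :
    iIndepSet (fun j ↦ Y j ⁻¹' B j) μ :=
  (iIndepSet_iff_meas_biInter fun j ↦ hmeas j (hB j)).2 fun _ ↦
    hY.meas_biInter fun j _ ↦ ⟨B j, hB j, rfl⟩

open scoped Classical in
theorem iIndepSet.measure_le_card_filter_mem_le [Fintype ι] {A : ι → Set Ω}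
    (hA : iIndepSet A μ) {q : ENNReal} (hq : ∀ j, μ (A j) ≤ q) (r : ℕ) :
    μ {ω | r ≤ #{j | ω ∈ A j}} ≤ (Fintype.card ι).choose r * q ^ r := by
  calc μ {ω | r ≤ #{j | ω ∈ A j}}
      ≤ μ (⋃ S ∈ powersetCard r univ, ⋂ j ∈ S, A j) := measure_mono fun ω hω ↦ by
        obtain ⟨S, hS, hcard⟩ := exists_subset_card_eq hω
        exact Set.mem_biUnion (mem_powersetCard.2 ⟨subset_univ S, hcard⟩)
          (Set.mem_iInter₂.2 fun j hj ↦ (mem_filter.1 (hS hj)).2)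
    _ ≤ ∑ S ∈ powersetCard r univ, μ (⋂ j ∈ S, A j) := measure_biUnion_finset_le _ _
    _ ≤ ∑ S ∈ powersetCard r univ, q ^ r := sum_le_sum fun S hS ↦ by
        rw [hA.meas_biInter, ← (mem_powersetCard.1 hS).2, ← prod_const]
        exact prod_le_prod' fun j _ ↦ hq j
    _ = (Fintype.card ι).choose r * q ^ r := by simp [card_powersetCard]

theorem measure_lt_abs_sub_integral_le_of_variance_le [IsFiniteMeasure μ] {X : Ω → ℝ}
    (hX : MemLp X 2 μ) {ε q : ℝ} (hε : 0 ≤ ε) (h : variance X μ ≤ q * ε ^ 2) :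
    μ {ω | ε < |X ω - μ[X]|} ≤ ENNReal.ofReal q := by
  rcases hε.eq_or_lt with rfl | hε
  · have hvar : variance X μ = 0 := le_antisymm (by simpa using h) (variance_nonneg X μ)
    rw [measure_eq_zero_iff_ae_notMem.2]
    · exact bot_le
    filter_upwards [ae_eq_integral_of_variance_eq_zero hX hvar] with ω hω
    simp [hω]
  · calc μ {ω | ε < |X ω - μ[X]|} ≤ μ {ω | ε ≤ |X ω - μ[X]|} :=
          measure_mono (Set.ofPred_subset_ofPred.2 fun _ ↦ le_of_lt)
      _ ≤ ENNReal.ofReal (variance X μ / ε ^ 2) := meas_ge_le_variance_div_sq hX hε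
      _ ≤ ENNReal.ofReal q := ENNReal.ofReal_le_ofReal ((div_le_iff₀ (by positivity)).2 h)

end ProbabilityTheory

theorem le_card_filter_lt_abs_sub_of_median {ι : Type*} [Fintype ι] {x : ι → ℝ} {θ m ε : ℝ}
    {r : ℕ} (hle : r ≤ #{j | x j ≤ θ}) (hge : r ≤ #{j | θ ≤ x j}) (h : ε < |θ - m|) :
    r ≤ #{j | ε < |x j - m|} := by
  rcases lt_abs.1 h with h | h
  · refine hge.trans (card_le_card fun j hj ↦ ?_)
    simp only [mem_filter, mem_univ, true_and] at hj ⊢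
    exact (by linarith : ε < x j - m).trans_le (le_abs_self _)
  · refine hle.trans (card_le_card fun j hj ↦ ?_)
    simp only [mem_filter, mem_univ, true_and] at hj ⊢
    exact (by linarith : ε < -(x j - m)).trans_le (neg_le_abs _)

theorem measure_lt_abs_median_sub_le {Ω ι : Type*} [MeasurableSpace Ω] {μ : Measure Ω}
    [Fintype ι] {Y : ι → Ω → ℝ} (hY : iIndepFun Y μ) (hmeas : ∀ j, Measurable (Y j))
    {θ : Ω → ℝ} {r : ℕ} (hmed : ∀ ω, r ≤ #{j | Y j ω ≤ θ ω} ∧ r ≤ #{j | θ ω ≤ Y j ω})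
    {m ε : ℝ} {q : ENNReal} (hdev : ∀ j, μ {ω | ε < |Y j ω - m|} ≤ q) :
    μ {ω | ε < |θ ω - m|} ≤ (Fintype.card ι).choose r * q ^ r := by
  have hA := hY.iIndepSet_preimage hmeas (B := fun _ ↦ {y | ε < |y - m|})
    fun _ ↦ measurableSet_lt measurable_const (by fun_prop)
  refine le_trans (measure_mono fun ω hω ↦ ?_) (hA.measure_le_card_filter_mem_le hdev r)
  simp only [Set.mem_ofPred_eq, Set.mem_preimage]
  convert le_card_filter_lt_abs_sub_of_median (hmed ω).1 (hmed ω).2 hω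

section BlockMean

variable {Ω κ : Type*} [MeasurableSpace Ω] {μ : Measure Ω}

noncomputable def blockMean (X : κ → Ω → ℝ) (s : Finset κ) (ω : Ω) : ℝ :=
  (#s : ℝ)⁻¹ * ∑ i ∈ s, X i ω

variable {X : κ → Ω → ℝ} {s : Finset κ}

theorem measurable_blockMean (hX : ∀ i, Measurable (X i)) : Measurable (blockMean X s) := by
  unfold blockMean
  fun_prop

theorem memLp_blockMean (hX : ∀ i ∈ s, MemLp (X i) 2 μ) : MemLp (blockMean X s) 2 μ :=
  (memLp_finsetSum s hX).const_mul _

theorem integral_blockMean [IsProbabilityMeasure μ] {m : ℝ} (hs : s.Nonempty)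
    (hX : ∀ i ∈ s, Integrable (X i) μ) (hm : ∀ i ∈ s, μ[X i] = m) : μ[blockMean X s] = m := by
  simp only [blockMean]
  rw [integral_const_mul, integral_finsetSum s hX, sum_congr rfl hm, sum_const, nsmul_eq_mul,
    ← mul_assoc, inv_mul_cancel₀ (by simpa using hs.ne_empty), one_mul]

theorem variance_blockMean {σ2 : ℝ} (hX : ∀ i ∈ s, MemLp (X i) 2 μ)
    (hindep : Set.Pairwise s fun i j ↦ IndepFun (X i) (X j) μ)
    (hv : ∀ i ∈ s, variance (X i) μ = σ2) : variance (blockMean X s) μ = σ2 / #s := by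
  have hsum : variance (∑ i ∈ s, X i) μ = #s * σ2 := by
    rw [IndepFun.variance_sum hX hindep, sum_congr rfl hv, sum_const, nsmul_eq_mul]
  have hmean : blockMean X s = fun ω ↦ (#s : ℝ)⁻¹ * (∑ i ∈ s, X i) ω := by
    ext ω
    simp [blockMean]
  rw [hmean, variance_const_mul, hsum]
  rcases eq_or_ne (#s : ℝ) 0 with hs | hs
  · simp [hs]
  · field_simp

theorem measure_lt_abs_blockMean_sub_le [IsProbabilityMeasure μ] {m σ2 ε q : ℝ} (hs : s.Nonempty)
    (hX : ∀ i ∈ s, MemLp (X i) 2 μ) (hindep : Set.Pairwise s fun i j ↦ IndepFun (X i) (X j) μ)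
    (hm : ∀ i ∈ s, μ[X i] = m) (hv : ∀ i ∈ s, variance (X i) μ = σ2) (hε : 0 ≤ ε)
    (h : σ2 ≤ q * ε ^ 2 * #s) :
    μ {ω | ε < |blockMean X s ω - m|} ≤ ENNReal.ofReal q := by
  have hvar : variance (blockMean X s) μ ≤ q * ε ^ 2 := by
    rw [variance_blockMean hX hindep hv, div_le_iff₀ (by simpa using hs.card_pos)]
    exact h
  simpa [integral_blockMean hs (fun i hi ↦ (hX i hi).integrable one_le_two) hm] using
    measure_lt_abs_sub_integral_le_of_variance_le (memLp_blockMean hX) hε hvar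

theorem ProbabilityTheory.iIndepFun.iIndepFun_blockMean {ι : Type*} {U : κ → Ω → ℝ}
    (hU : iIndepFun U μ) (hmeas : ∀ i, Measurable (U i)) {I : ι → Finset κ}
    (hI : Pairwise (Function.onFun Disjoint I)) : iIndepFun (fun j ↦ blockMean U (I j)) μ := by
  convert (hU.iIndepFun_disjoint_blocks hmeas hI).comp (fun j x ↦ (#(I j) : ℝ)⁻¹ * ∑ i, x i)
    (fun j ↦ by fun_prop) using 2 with j
  ext ω
  simp only [blockMean, Function.comp_apply, sum_coe_sort (I j) (U · ω)]

end BlockMean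

theorem Nat.le_two_mul_mul_div {n k : ℕ} (hk : 0 < k) (hkn : k ≤ n) : n ≤ 2 * k * (n / k) := by
  have h1 : 0 < n / k := Nat.div_pos hkn hk
  have h2 := Nat.div_add_mod n k
  have h3 := Nat.mod_lt n hk
  nlinarith

theorem Real.choose_mul_pow_le_of_log_inv_le {k r : ℕ} {δ : ℝ} (hδ : 0 < δ) (hkr : k ≤ 2 * r)
    (hk : log (1 / δ) ≤ k) : (k.choose r : ℝ) * ((2 * exp 1)⁻¹ ^ 2) ^ r ≤ δ := by
  calc (k.choose r : ℝ) * ((2 * exp 1)⁻¹ ^ 2) ^ r ≤ 2 ^ k * (2 * exp 1)⁻¹ ^ k := by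
        gcongr
        · exact_mod_cast Nat.choose_le_two_pow k r
        · rw [← pow_mul]
          exact pow_le_pow_of_le_one (by positivity)
            (inv_le_one_of_one_le₀ (by linarith [add_one_le_exp 1])) hkr
    _ = exp (-k) := by
        rw [← mul_pow, mul_inv, ← mul_assoc, mul_inv_cancel₀ two_ne_zero, one_mul, exp_neg,
          ← exp_one_pow, inv_pow]
    _ ≤ exp (-log (1 / δ)) := exp_le_exp.2 (neg_le_neg hk)
    _ = δ := by rw [exp_neg, exp_log (by positivity), one_div, inv_inv]

theorem Real.le_inv_two_mul_exp_sq_mul_sq_mul {a σ2 n c : ℝ} (hσ2 : 0 ≤ σ2) (ha : 0 ≤ a)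
    (hn : 0 < n) (hc : n ≤ 2 * a * c) :
    σ2 ≤ (2 * exp 1)⁻¹ ^ 2 * (2 * √2 * exp 1 * √(a * σ2 / n)) ^ 2 * c := by
  have hsq : (2 * exp 1)⁻¹ ^ 2 * (2 * √2 * exp 1 * √(a * σ2 / n)) ^ 2 = 2 * a * σ2 / n := by
    rw [mul_pow, mul_pow, mul_pow, sq_sqrt zero_le_two, sq_sqrt (by positivity)]
    field_simp
  rw [hsq, div_mul_eq_mul_div, le_div_iff₀ hn]
  nlinarith [mul_le_mul_of_nonneg_left hc hσ2]

theorem median_of_means_deviation_general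
    {Ω : Type*} [MeasurableSpace Ω] (μ : Measure Ω) [IsProbabilityMeasure μ]
    {n : ℕ} (U : Fin n → Ω → ℝ)
    (hmeas : ∀ i, Measurable (U i))
    (hindep : iIndepFun U μ)
    (m σ2 : ℝ)
    (hmean : ∀ i, ∫ ω, U i ω ∂μ = m)
    (hint2 : ∀ i, Integrable (fun ω => (U i ω - m)^2) μ)
    (hvar : ∀ i, ∫ ω, (U i ω - m)^2 ∂μ = σ2)
    (δ : ℝ) (hδ : δ ∈ Set.Ioo (0:ℝ) 1)
    (k : ℕ) (hk : k = ⌈Real.log (1/δ)⌉₊)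
    (hn : 2 * (1 + Real.log (1/δ)) ≤ (n : ℝ))
    (I : Fin k → Finset (Fin n))
    (hdisj : ∀ j l, j ≠ l → Disjoint (I j) (I l))
    (hsize : ∀ j, n / k ≤ (I j).card)
    (θhat : Ω → ℝ)
    (hmed : ∀ ω,
      (k + 1) / 2 ≤ (Finset.univ.filter
        (fun j => ((I j).card : ℝ)⁻¹ * ∑ i ∈ I j, U i ω ≤ θhat ω)).card ∧
      (k + 1) / 2 ≤ (Finset.univ.filter
        (fun j => θhat ω ≤ ((I j).card : ℝ)⁻¹ * ∑ i ∈ I j, U i ω)).card) :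
    μ {ω | 2 * Real.sqrt 2 * Real.exp 1 *
        Real.sqrt ((1 + Real.log (1/δ)) * σ2 / n) < |θhat ω - m|} ≤
      ENNReal.ofReal δ := by
  obtain ⟨hδ0, hδ1⟩ := hδ
  set L := Real.log (1 / δ)
  have hL : 0 < L := Real.log_pos (by rw [one_div]; exact one_lt_inv₀ hδ0 |>.2 hδ1)
  have hk0 : 0 < k := hk ▸ Nat.ceil_pos.2 hL
  have hkL : (k : ℝ) < 1 + L := by rw [hk, add_comm]; exact Nat.ceil_lt_add_one hL.le
  have hkn : k ≤ n := by exact_mod_cast (by linarith : (k : ℝ) ≤ n)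
  have hU2 i : MemLp (U i) 2 μ :=
    memLp_two_of_integrable_sq_sub (hmeas i).aestronglyMeasurable (hint2 i)
  have hvarU i : variance (U i) μ = σ2 := by
    rw [variance_eq_integral (hmeas i).aemeasurable, hmean i, hvar i]
  have hσ2 : 0 ≤ σ2 := hvarU ⟨0, by omega⟩ ▸ variance_nonneg _ _
  set q : ℝ := (2 * Real.exp 1)⁻¹ ^ 2
  set ε := 2 * Real.sqrt 2 * Real.exp 1 * Real.sqrt ((1 + L) * σ2 / n)
  have hdev j : μ {ω | ε < |blockMean U (I j) ω - m|} ≤ ENNReal.ofReal q := by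
    have hblock : (n : ℝ) ≤ 2 * (1 + L) * #(I j) :=
      calc (n : ℝ) ≤ 2 * k * (n / k : ℕ) := by exact_mod_cast Nat.le_two_mul_mul_div hk0 hkn
        _ ≤ 2 * (1 + L) * #(I j) := by gcongr; exact_mod_cast hsize j
    refine measure_lt_abs_blockMean_sub_le ?_ (fun i _ ↦ hU2 i)
      (fun i _ j _ hij ↦ hindep.indepFun hij) (fun i _ ↦ hmean i) (fun i _ ↦ hvarU i)
      (by positivity) ?_
    · exact card_pos.1 (lt_of_lt_of_le (Nat.div_pos hkn hk0) (hsize j))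
    · exact Real.le_inv_two_mul_exp_sq_mul_sq_mul hσ2 (by positivity) (by linarith) hblock
  calc μ {ω | ε < |θhat ω - m|}
      ≤ (Fintype.card (Fin k)).choose ((k + 1) / 2) * ENNReal.ofReal q ^ ((k + 1) / 2) :=
        measure_lt_abs_median_sub_le (hindep.iIndepFun_blockMean hmeas fun j l ↦ hdisj j l)
          (fun j ↦ measurable_blockMean hmeas) hmed hdev
    _ = ENNReal.ofReal (k.choose ((k + 1) / 2) * q ^ ((k + 1) / 2)) := by
        rw [ENNReal.ofReal_mul (by positivity), ENNReal.ofReal_natCast,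
          ENNReal.ofReal_pow (by positivity : 0 ≤ q), Fintype.card_fin]
    _ ≤ ENNReal.ofReal δ := ENNReal.ofReal_le_ofReal
        (Real.choose_mul_pow_le_of_log_inv_le hδ0 (by omega) (hk ▸ Nat.le_ceil L))

/-- deviation bound for the median-of-means estimator.  `U 1,…,U n` are
i.i.d. with mean `m` and variance `σ2`, `k = ⌈log(1/δ)⌉`, `n ≥ 2(1+log(1/δ))`, the index
set is partitioned into `k` disjoint blocks `I j` of size at least `⌊n/k⌋`, and `θhat` is
a median of the block means.  Then `P{|θhat − m| > 2√2·e·√((1+log(1/δ))σ²/n)} ≤ δ`. -/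
theorem median_of_means_deviation
    {Ω : Type*} [MeasurableSpace Ω] (μ : Measure Ω) [IsProbabilityMeasure μ]
    {n : ℕ} (U : Fin n → Ω → ℝ)
    (hmeas : ∀ i, Measurable (U i))
    (hindep : iIndepFun U μ)
    (hident : ∀ i j, IdentDistrib (U i) (U j) μ μ)
    (m σ2 : ℝ) (hσ2 : 0 ≤ σ2)
    (hint : ∀ i, Integrable (U i) μ)
    (hmean : ∀ i, ∫ ω, U i ω ∂μ = m)
    (hint2 : ∀ i, Integrable (fun ω => (U i ω - m)^2) μ)
    (hvar : ∀ i, ∫ ω, (U i ω - m)^2 ∂μ = σ2)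
    (δ : ℝ) (hδ : δ ∈ Set.Ioo (0:ℝ) 1)
    (k : ℕ) (hk : k = ⌈Real.log (1/δ)⌉₊)
    (hn : 2 * (1 + Real.log (1/δ)) ≤ (n : ℝ))
    (I : Fin k → Finset (Fin n))
    (hdisj : ∀ j l, j ≠ l → Disjoint (I j) (I l))
    (hcover : ∀ i : Fin n, ∃ j, i ∈ I j)
    (hsize : ∀ j, n / k ≤ (I j).card)
    (θhat : Ω → ℝ)
    (hmed : ∀ ω,
      (k + 1) / 2 ≤ (Finset.univ.filter
        (fun j => ((I j).card : ℝ)⁻¹ * ∑ i ∈ I j, U i ω ≤ θhat ω)).card ∧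
      (k + 1) / 2 ≤ (Finset.univ.filter
        (fun j => θhat ω ≤ ((I j).card : ℝ)⁻¹ * ∑ i ∈ I j, U i ω)).card) :
    μ {ω | 2 * Real.sqrt 2 * Real.exp 1 *
        Real.sqrt ((1 + Real.log (1/δ)) * σ2 / n) < |θhat ω - m|} ≤
      ENNReal.ofReal δ :=
  median_of_means_deviation_general μ U hmeas hindep m σ2 hmean hint2 hvar δ hδ k hk hn I hdisj
    hsize θhat hmed
end
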